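/- arXiv:1508.07520 — 3 statements merged into one kernel-verified Lean document; each statement's English description precedes it below -/
import Mathlib

section
/- For N = 3 with θ₁ = 0 and μ₁ = μ₂ = μ₃ = 1, the symmetric configuration θ₂ = 3π/4, θ₃ = -3π/4 is a critical point of V. -/
/-!
With `f Δ = cos Δ + ½ log (2 - 2 cos Δ)` we have `V3 a b = -(f a + f b + f (a - b))`, so
`∂V3/∂a = -(f' a + f' (a - b))`, which vanishes at the symmetric point because
`f' (3π/4) = -1/2` and `f' (3π/2) = 1/2`. Since `f` is even, `V3 a b = V3 (-b) (-a)`, and this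
symmetry turns the second partial derivative into the first.
-/

open Real

/-- The function `V` for the (1+3)-vortex problem with equal weights `μ₁ = μ₂ = μ₃ = 1`
and `θ₁ = 0` fixed, as a function of `θ₂` and `θ₃`. -/
noncomputable def V3 (a b : ℝ) : ℝ :=
  -((Real.cos a + (1/2) * Real.log (2 - 2 * Real.cos a))
    + (Real.cos b + (1/2) * Real.log (2 - 2 * Real.cos b))
    + (Real.cos (a - b) + (1/2) * Real.log (2 - 2 * Real.cos (a - b))))

noncomputable def pairTerm (x : ℝ) : ℝ := cos x + (1/2) * log (2 - 2 * cos x)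

noncomputable def pairTermDeriv (x : ℝ) : ℝ := -sin x + sin x / (2 - 2 * cos x)

lemma V3_eq (a b : ℝ) : V3 a b = -(pairTerm a + pairTerm b + pairTerm (a - b)) := rfl

lemma pairTerm_neg (x : ℝ) : pairTerm (-x) = pairTerm x := by
  simp only [pairTerm, cos_neg]

lemma V3_neg_swap (a b : ℝ) : V3 (-b) (-a) = V3 a b := by
  rw [V3_eq, V3_eq, pairTerm_neg, pairTerm_neg, neg_sub_neg]
  ring

lemma hasDerivAt_pairTerm {x : ℝ} (hx : cos x ≠ 1) :
    HasDerivAt pairTerm (pairTermDeriv x) x := by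
  have hne : 2 - 2 * cos x ≠ 0 := fun h => hx (by linarith)
  have hlog := ((((hasDerivAt_cos x).const_mul 2).const_sub 2).log hne).const_mul (1/2 : ℝ)
  exact ((hasDerivAt_cos x).add hlog).congr_deriv (by rw [pairTermDeriv]; ring)

lemma hasDerivAt_V3_fst {a b : ℝ} (ha : cos a ≠ 1) (hab : cos (a - b) ≠ 1) :
    HasDerivAt (fun t => V3 t b) (-(pairTermDeriv a + pairTermDeriv (a - b))) a := by
  have hdiff : HasDerivAt (fun t => pairTerm (t - b)) (pairTermDeriv (a - b)) a :=
    (hasDerivAt_pairTerm hab).comp_sub_const a b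
  exact (((hasDerivAt_pairTerm ha).add_const (pairTerm b)).add hdiff).neg

lemma cos_three_pi_div_four : cos (3 * π / 4) = -(√2 / 2) := by
  rw [show 3 * π / 4 = π - π / 4 by ring, cos_pi_sub, cos_pi_div_four]

lemma sin_three_pi_div_four : sin (3 * π / 4) = √2 / 2 := by
  rw [show 3 * π / 4 = π - π / 4 by ring, sin_pi_sub, sin_pi_div_four]

lemma cos_three_pi_div_two : cos (3 * π / 2) = 0 := by
  rw [show 3 * π / 2 = π / 2 + π by ring, cos_add_pi, cos_pi_div_two, neg_zero]

lemma sin_three_pi_div_two : sin (3 * π / 2) = -1 := by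
  rw [show 3 * π / 2 = π / 2 + π by ring, sin_add_pi, sin_pi_div_two]

lemma pairTermDeriv_three_pi_div_four : pairTermDeriv (3 * π / 4) = -1 / 2 := by
  have hsq : √2 ^ 2 = 2 := sq_sqrt zero_le_two
  have hpos : 0 < 2 - 2 * -(√2 / 2) := by linarith [sqrt_nonneg 2]
  have hquot : √2 / 2 / (2 - 2 * -(√2 / 2)) = (√2 - 1) / 2 := by
    rw [div_eq_iff hpos.ne']
    linear_combination -hsq / 2
  rw [pairTermDeriv, cos_three_pi_div_four, sin_three_pi_div_four, hquot]
  ring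

lemma pairTermDeriv_three_pi_div_two : pairTermDeriv (3 * π / 2) = 1 / 2 := by
  rw [pairTermDeriv, cos_three_pi_div_two, sin_three_pi_div_two]
  norm_num

/-- The symmetric configuration `θ₂ = 3π/4`, `θ₃ = -3π/4` is a critical point of `V`. -/
theorem symmetric_three_pi_quarter_critical_point :
    deriv (fun t => V3 t (-(3 * Real.pi / 4))) (3 * Real.pi / 4) = 0 ∧
    deriv (fun t => V3 (3 * Real.pi / 4) t) (-(3 * Real.pi / 4)) = 0 := by
  have hsub : 3 * π / 4 - -(3 * π / 4) = 3 * π / 2 := by ring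
  have hfst : deriv (fun t => V3 t (-(3 * π / 4))) (3 * π / 4) = 0 := by
    have ha : cos (3 * π / 4) ≠ 1 := by
      rw [cos_three_pi_div_four]
      nlinarith [sqrt_nonneg 2]
    have hab : cos (3 * π / 4 - -(3 * π / 4)) ≠ 1 := by
      rw [hsub, cos_three_pi_div_two]
      norm_num
    rw [(hasDerivAt_V3_fst ha hab).deriv, hsub, pairTermDeriv_three_pi_div_four,
      pairTermDeriv_three_pi_div_two]
    norm_num
  refine ⟨hfst, ?_⟩
  have hswap : (fun t => V3 (3 * π / 4) t) = fun t => V3 (-t) (-(3 * π / 4)) := by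
    funext t
    rw [V3_neg_swap]
  rw [hswap, deriv_comp_neg (fun t => V3 t (-(3 * π / 4))), neg_neg, hfst, neg_zero]
end

section
/- Suppose (μ₁,μ₂,μ₃) are nonzero reals and r ∈ ℝ, r ∉ {0, ±1}, satisfy both polynomial equations -μ₃ - 6μ₁r² + 15μ₃r² - 4μ₁r⁴ - 15μ₃r⁴ + 2μ₁r⁶ + μ₃r⁶ = 0 and -μ₂ - 6μ₁r² + 15μ₂r² - 4μ₁r⁴ - 15μ₂r⁴ + 2μ₁r⁶ + μ₂r⁶ = 0. Then μ₂ = μ₃. -/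
/-!
Writing `s = r²`, each equation reads `μ · Q(s) + μ₁ · P(s) = 0` with
`Q(s) = s³ - 15s² + 15s - 1` and `P(s) = 2s(s - 3)(s + 1)`. Subtracting the two equations
gives `(μ₂ - μ₃) Q(s) = 0`, and `Q` vanishes at none of the roots `0, 3, -1` of `P`
(its values there are `-1, -64, -32`), so `Q(s) = 0` would force `μ₁ = 0`.
-/

section

variable {K : Type*} [CommRing K] [IsDomain K]

theorem eq_of_mul_add_mul_eq_zero {q p a b c : K} (hqp : q = 0 → p ≠ 0) (hc : c ≠ 0)
    (ha : a * q + c * p = 0) (hb : b * q + c * p = 0) : a = b := by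
  have hdiff : (a - b) * q = 0 := by linear_combination ha - hb
  rcases mul_eq_zero.mp hdiff with hab | hq
  · exact sub_eq_zero.mp hab
  · have hp : c * p = 0 := by simpa [hq] using ha
    exact absurd ((mul_eq_zero.mp hp).resolve_left hc) (hqp hq)

theorem cubic_ne_zero_of_cubic_eq_zero (h2 : (2 : K) ≠ 0) {s : K}
    (hq : s ^ 3 - 15 * s ^ 2 + 15 * s - 1 = 0) : 2 * s * (s - 3) * (s + 1) ≠ 0 := by
  have h2pow (n : ℕ) : (2 : K) ^ n ≠ 0 := pow_ne_zero n h2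
  intro hp
  simp only [mul_eq_zero, sub_eq_zero, h2, false_or] at hp
  rcases hp with (rfl | rfl) | hs
  · norm_num at hq
  · exact h2pow 6 (by linear_combination -hq)
  · obtain rfl : s = -1 := eq_neg_of_add_eq_zero_left hs
    exact h2pow 5 (by linear_combination -hq)

end

theorem symmetric_config_forces_equal_weights_general
    (μ₁ μ₂ μ₃ r : ℝ) (hμ₁ : μ₁ ≠ 0)
    (h3 : -μ₃ - 6*μ₁*r^2 + 15*μ₃*r^2 - 4*μ₁*r^4 - 15*μ₃*r^4 + 2*μ₁*r^6 + μ₃*r^6 = 0)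
    (h2 : -μ₂ - 6*μ₁*r^2 + 15*μ₂*r^2 - 4*μ₁*r^4 - 15*μ₂*r^4 + 2*μ₁*r^6 + μ₂*r^6 = 0) :
    μ₂ = μ₃ := by
  refine eq_of_mul_add_mul_eq_zero
    (cubic_ne_zero_of_cubic_eq_zero (s := r ^ 2) two_ne_zero) hμ₁ ?_ ?_
  · linear_combination h2
  · linear_combination h3

/-- If nonzero weights `μ₁, μ₂, μ₃` and a non-collision value `r` satisfy both
symmetric-configuration polynomial equations, then `μ₂ = μ₃`. -/
theorem symmetric_config_forces_equal_weights
    (μ₁ μ₂ μ₃ r : ℝ) (hμ₁ : μ₁ ≠ 0) (hμ₂ : μ₂ ≠ 0) (hμ₃ : μ₃ ≠ 0)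
    (hr0 : r ≠ 0) (hr1 : r ≠ 1) (hrm1 : r ≠ -1)
    (h3 : -μ₃ - 6*μ₁*r^2 + 15*μ₃*r^2 - 4*μ₁*r^4 - 15*μ₃*r^4 + 2*μ₁*r^6 + μ₃*r^6 = 0)
    (h2 : -μ₂ - 6*μ₁*r^2 + 15*μ₂*r^2 - 4*μ₁*r^4 - 15*μ₂*r^4 + 2*μ₁*r^6 + μ₂*r^6 = 0) :
    μ₂ = μ₃ :=
  symmetric_config_forces_equal_weights_general μ₁ μ₂ μ₃ r hμ₁ h3 h2
end

section
/- For N = 2 with nonzero weights μ₁, μ₂, the critical points of V (with θ₁ = 0 fixed) are exactly θ₂ ∈ {π/3, π, 5π/3}; in particular the set of critical configurations is independent of the values of μ₁ and μ₂. -/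
/-! Away from `cos θ = 1` the derivative of `V(0, ·)` is `-μ₁μ₂ sin θ (2 cos θ - 1) / (2 - 2 cos θ)`,
so on `(0, 2π)` it vanishes exactly where `sin θ = 0` (`θ = π`) or `cos θ = 1/2`
(`θ = π/3, 5π/3`), whatever the nonzero factor `μ₁μ₂`. -/

open Real Set

theorem cos_ne_one_of_mem_Ioo {θ : ℝ} (hθ : θ ∈ Ioo 0 (2 * π)) : cos θ ≠ 1 := fun h =>
  hθ.1.ne' ((cos_eq_one_iff_of_lt_of_lt (by linarith [pi_pos, hθ.1]) hθ.2).1 h)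

theorem sin_eq_zero_iff_eq_pi_of_mem_Ioo {θ : ℝ} (hθ : θ ∈ Ioo 0 (2 * π)) :
    sin θ = 0 ↔ θ = π := by
  have h := sin_eq_zero_iff_of_lt_of_lt (x := θ - π) (by linarith [hθ.1]) (by linarith [hθ.2])
  rwa [sin_sub_pi, neg_eq_zero, sub_eq_zero] at h

theorem cos_eq_cos_iff_of_mem_Icc {a θ : ℝ} (ha : a ∈ Icc 0 π) (hθ : θ ∈ Icc 0 (2 * π)) :
    cos θ = cos a ↔ θ = a ∨ θ = 2 * π - a := by
  constructor
  · intro h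
    by_cases hθπ : θ ≤ π
    · exact Or.inl (injOn_cos ⟨hθ.1, hθπ⟩ ha h)
    · have : 2 * π - θ = a :=
        injOn_cos ⟨by linarith [hθ.2], by linarith⟩ ha (by rwa [cos_two_pi_sub])
      exact Or.inr (by linarith)
  · rintro (rfl | rfl)
    · rfl
    · exact cos_two_pi_sub a

theorem hasDerivAt_cos_add_half_log_two_sub_two_cos {t : ℝ} (ht : cos t ≠ 1) :
    HasDerivAt (fun t => cos t + 1 / 2 * log (2 - 2 * cos t))
      (sin t * (2 * cos t - 1) / (2 - 2 * cos t)) t := by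
  have hdenom : 2 - 2 * cos t ≠ 0 := fun h => ht (by linarith)
  have hlog : HasDerivAt (fun t => log (2 - 2 * cos t)) (2 * sin t / (2 - 2 * cos t)) t := by
    simpa using (((hasDerivAt_cos t).const_mul 2).const_sub 2).log hdenom
  refine ((hasDerivAt_cos t).add (hlog.const_mul (1 / 2))).congr_deriv ?_
  field_simp
  ring

/-- For `N = 2` with nonzero weights `μ₁, μ₂` and `θ₁ = 0` fixed, the critical points of
`V(0, θ₂) = -μ₁μ₂(cos θ₂ + ½ log(2-2cos θ₂))` on `(0, 2π)` are exactly
`θ₂ ∈ {π/3, π, 5π/3}`; in particular they do not depend on `μ₁, μ₂`. -/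
theorem two_vortex_critical_points (μ₁ μ₂ : ℝ) (hμ₁ : μ₁ ≠ 0) (hμ₂ : μ₂ ≠ 0)
    (θ₂ : ℝ) (hθ : θ₂ ∈ Set.Ioo 0 (2 * Real.pi)) :
    deriv (fun t => -(μ₁ * μ₂) * (Real.cos t + (1/2) * Real.log (2 - 2 * Real.cos t))) θ₂ = 0
      ↔ θ₂ = Real.pi / 3 ∨ θ₂ = Real.pi ∨ θ₂ = 5 * Real.pi / 3 := by
  have hcos := cos_ne_one_of_mem_Ioo hθ
  have hdenom : 2 - 2 * cos θ₂ ≠ 0 := fun h => hcos (by linarith)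
  have hcos_half : 2 * cos θ₂ - 1 = 0 ↔ θ₂ = π / 3 ∨ θ₂ = 5 * π / 3 := by
    rw [show 5 * π / 3 = 2 * π - π / 3 by ring, ← cos_eq_cos_iff_of_mem_Icc
      ⟨by linarith [pi_pos], by linarith [pi_pos]⟩ (Ioo_subset_Icc_self hθ), cos_pi_div_three]
    constructor <;> intro h <;> linarith
  rw [((hasDerivAt_cos_add_half_log_two_sub_two_cos hcos).const_mul _).deriv, mul_eq_zero,
    neg_eq_zero, or_iff_right (mul_ne_zero hμ₁ hμ₂), div_eq_zero_iff, or_iff_left hdenom,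
    mul_eq_zero, sin_eq_zero_iff_eq_pi_of_mem_Ioo hθ, hcos_half]
  tauto
end
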